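/- Let φ be a continuous RDS on a Polish space E over an MDS (Ω,𝓕,P,(ϑ_t)). If there exists a compact random set K which weakly attracts every compact subset of E, then for every ε>0 there exists a compact subset C_ε of E such that for each δ>0 and each compact subset C of E there is a t_0>0 with P{φ(t,ω)(C) ⊆ C_ε^δ} ≥ 1−ε for all t ≥ t_0. -/

import Mathlib

open MeasureTheory Set Filter Topology Metric

noncomputable section

/-- Hausdorff semi-distance `d(B, A) = sup_{b ∈ B} inf_{a ∈ A} d(b, a)`, valued in `ℝ≥0∞`. -/
def semiDist {E : Type*} [PseudoEMetricSpace E] (B A : Set E) : ENNReal :=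
  ⨆ b ∈ B, EMetric.infEdist b A

/-- A metric dynamical system (MDS) over the probability space `(Ω, 𝓕, P)`. -/
structure MetricDS (Ω : Type*) [MeasurableSpace Ω] (P : Measure Ω) where
  θ : ℝ → Ω → Ω
  measurable_theta : Measurable fun p : ℝ × Ω => θ p.1 p.2
  theta_add : ∀ s t : ℝ, θ (s + t) = θ s ∘ θ t
  theta_zero : θ 0 = id
  measurePreserving_theta : ∀ t : ℝ, MeasurePreserving (θ t) P P

/-- A continuous random dynamical system (RDS) `φ` on `E` over an MDS, with time `[0,∞)`
(the map is defined for all real times, but only its restriction to `t ≥ 0` is constrained). -/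
structure ContinuousRDS (E Ω : Type*) [MetricSpace E] [MeasurableSpace E]
    [MeasurableSpace Ω] (P : Measure Ω) extends MetricDS Ω P where
  φ : ℝ → E → Ω → E
  measurable_phi : Measurable fun p : ℝ × E × Ω => φ p.1 p.2.1 p.2.2
  cocycle : ∀ s t : ℝ, 0 ≤ s → 0 ≤ t → ∀ x ω, φ (t + s) x ω = φ t (φ s x ω) (θ s ω)
  phi_zero : ∀ x ω, φ 0 x ω = x
  continuous_phi : ∀ t : ℝ, 0 ≤ t → ∀ ω, Continuous fun x => φ t x ω

variable {E Ω : Type*} [MetricSpace E] [MeasurableSpace E] [MeasurableSpace Ω] {P : Measure Ω}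

/-- A compact random set: values are nonempty compact subsets of `E`, and
`ω ↦ d(x, K ω)` is measurable for every `x`. -/
def IsCompactRandomSet (K : Ω → Set E) : Prop :=
  (∀ ω, IsCompact (K ω)) ∧ (∀ ω, (K ω).Nonempty) ∧
    ∀ x : E, Measurable fun ω => infDist x (K ω)

/-- Strict `φ`-invariance: for each `t ≥ 0`, a.s. `φ(t,ω)(A(ω)) = A(ϑ_t ω)`. -/
def StrictlyInvariant (ψ : ContinuousRDS E Ω P) (A : Ω → Set E) : Prop :=
  ∀ t : ℝ, 0 ≤ t → ∀ᵐ ω ∂P, (fun x => ψ.φ t x ω) '' A ω = A (ψ.θ t ω)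

/-- `K` attracts `B` strongly: `d(φ(t, ϑ_{-t} ω)(B), K(ω)) → 0` almost surely. -/
def StronglyAttracts (ψ : ContinuousRDS E Ω P) (K : Ω → Set E) (B : Set E) : Prop :=
  ∀ᵐ ω ∂P, Tendsto (fun t : ℝ =>
    semiDist ((fun x => ψ.φ t x (ψ.θ (-t) ω)) '' B) (K ω)) atTop (𝓝 0)

/-- `K` attracts `B` weakly: `d(φ(t, ϑ_{-t} ω)(B), K(ω)) → 0` in probability. -/
def WeaklyAttracts (ψ : ContinuousRDS E Ω P) (K : Ω → Set E) (B : Set E) : Prop :=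
  ∀ ε : ENNReal, 0 < ε → Tendsto (fun t : ℝ =>
    P {ω | ε < semiDist ((fun x => ψ.φ t x (ψ.θ (-t) ω)) '' B) (K ω)}) atTop (𝓝 0)

/-- Forward version of weak attraction: `sup_{x ∈ B} d(φ(t,ω)(x), A(ϑ_t ω)) → 0` in probability. -/
def WeaklyAttractsForward (ψ : ContinuousRDS E Ω P) (A : Ω → Set E) (B : Set E) : Prop :=
  ∀ ε : ENNReal, 0 < ε → Tendsto (fun t : ℝ =>
    P {ω | ε < semiDist ((fun x => ψ.φ t x ω) '' B) (A (ψ.θ t ω))}) atTop (𝓝 0)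

/-- A strong `𝓑`-attractor. -/
def IsStrongAttractor (ψ : ContinuousRDS E Ω P) (𝓑 : Set (Set E)) (A : Ω → Set E) : Prop :=
  IsCompactRandomSet A ∧ StrictlyInvariant ψ A ∧ ∀ B ∈ 𝓑, StronglyAttracts ψ A B

/-- A weak `𝓑`-attractor. -/
def IsWeakAttractor (ψ : ContinuousRDS E Ω P) (𝓑 : Set (Set E)) (A : Ω → Set E) : Prop :=
  IsCompactRandomSet A ∧ StrictlyInvariant ψ A ∧ ∀ B ∈ 𝓑, WeaklyAttractsForward ψ A B

/-- The `Ω`-limit set of a set `B ⊆ E`: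
`Ω_B(ω) = ⋂_{T ≥ 0} closure (⋃_{t ≥ T} φ(t, ϑ_{-t} ω)(B))`. -/
def omegaLimitSet (ψ : ContinuousRDS E Ω P) (B : Set E) (ω : Ω) : Set E :=
  ⋂ T ∈ Ici (0:ℝ), closure (⋃ t ∈ Ici T, (fun x => ψ.φ t x (ψ.θ (-t) ω)) '' B)

/-!
The weakly attracting compact random set `K` is tight: since `E` is Polish, for every `ε` there is
a compact `Cε` with `P {K ⊄ Cε} ≤ ε / 2` (cover `K ω` by finitely many balls of radius
`1 / (m + 1)` around a dense sequence, with a number of balls chosen so that the failure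
probabilities sum to at most `ε / 2`). Weak attraction puts `φ(t, ϑ₋ₜ ω)(C)` into the
`δ`-neighbourhood of `K ω` outside an event of probability at most `ε / 2` for large `t`, hence
into the `δ`-neighbourhood of `Cε` with probability at least `1 - ε`; since `ϑₜ` is a measure
preserving bijection, the same bound holds for `φ(t, ω)(C)`.
-/

open scoped ENNReal

section Effros

variable {X : Type*} [PseudoMetricSpace X] [TopologicalSpace.SeparableSpace X] {K : Ω → Set X}

theorem measurableSet_setOf_inter_nonempty (hne : ∀ ω, (K ω).Nonempty)
    (hmeas : ∀ x, Measurable fun ω => infDist x (K ω)) {U : Set X} (hU : IsOpen U) :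
    MeasurableSet {ω | (K ω ∩ U).Nonempty} := by
  obtain ⟨D, hDc, hD⟩ := TopologicalSpace.exists_countable_dense X
  have hset : {ω | (K ω ∩ U).Nonempty} =
      ⋃ x ∈ D, ⋃ q : ℚ, {ω | ball x q ⊆ U ∧ infDist x (K ω) < q} := by
    ext ω
    simp only [mem_iUnion, mem_ofPred_eq, exists_prop]
    constructor
    · rintro ⟨y, hyK, hyU⟩
      obtain ⟨r, hr, hrU⟩ := Metric.isOpen_iff.1 hU y hyU
      obtain ⟨x, hxD, hxy⟩ := hD.exists_dist_lt y (by positivity : (0 : ℝ) < r / 3)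
      rw [dist_comm] at hxy
      obtain ⟨q, hxq, hqr⟩ := exists_rat_btwn (show dist x y < 2 * r / 3 by linarith)
      exact ⟨x, hxD, q, (ball_subset_ball' (by linarith)).trans hrU,
        (infDist_le_dist_of_mem hyK).trans_lt hxq⟩
    · rintro ⟨x, -, q, hqU, hxK⟩
      obtain ⟨y, hyK, hxy⟩ := (infDist_lt_iff (hne ω)).1 hxK
      exact ⟨y, hyK, hqU (mem_ball'.2 hxy)⟩
  rw [hset]
  exact MeasurableSet.biUnion hDc fun x _ => MeasurableSet.iUnion fun q =>
    (MeasurableSet.const _).inter (hmeas x measurableSet_Iio)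

theorem measurableSet_setOf_subset_of_isClosed (hne : ∀ ω, (K ω).Nonempty)
    (hmeas : ∀ x, Measurable fun ω => infDist x (K ω)) {F : Set X} (hF : IsClosed F) :
    MeasurableSet {ω | K ω ⊆ F} := by
  have hset : {ω | K ω ⊆ F} = {ω | (K ω ∩ Fᶜ).Nonempty}ᶜ := by
    ext ω
    simp [inter_compl_nonempty_iff]
  rw [hset]
  exact (measurableSet_setOf_inter_nonempty hne hmeas hF.isOpen_compl).compl

end Effros

theorem isCompact_iInter_biUnion_closedBall {X : Type*} [PseudoMetricSpace X] [CompleteSpace X]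
    {s : ℕ → Set X} (hs : ∀ m, (s m).Finite) :
    IsCompact (⋂ m : ℕ, ⋃ y ∈ s m, closedBall y (1 / (m + 1))) := by
  refine TotallyBounded.isCompact_of_isClosed (Metric.totallyBounded_iff.2 fun r hr => ?_)
    (isClosed_iInter fun m => (hs m).isClosed_biUnion fun _ _ => isClosed_closedBall)
  obtain ⟨m, hm⟩ := exists_nat_one_div_lt hr
  exact ⟨s m, hs m,
    (iInter_subset _ m).trans (iUnion₂_mono fun y _ => closedBall_subset_ball hm)⟩

namespace IsCompactRandomSet

variable {X : Type*} [MetricSpace X] [TopologicalSpace.SeparableSpace X] [IsFiniteMeasure P]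
  {K : Ω → Set X}

theorem exists_measure_not_subset_biUnion_closedBall_le (hK : IsCompactRandomSet K)
    {x : ℕ → X} (hx : DenseRange x) {r : ℝ} (hr : 0 < r) {η : ℝ≥0∞} (hη : 0 < η) :
    ∃ n, P {ω | ¬ K ω ⊆ ⋃ y ∈ x '' Iio n, closedBall y r} ≤ η := by
  set U : ℕ → Set X := fun n => ⋃ y ∈ x '' Iio n, closedBall y r
  have hU_mono : Monotone U := fun n n' h =>
    biUnion_subset_biUnion_left (image_mono (Iio_subset_Iio h))
  have hU_closed (n : ℕ) : IsClosed (U n) :=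
    ((finite_Iio n).image x).isClosed_biUnion fun _ _ => isClosed_closedBall
  have hcover (ω : Ω) : ∃ n, K ω ⊆ U n := by
    obtain ⟨t, ht⟩ := (hK.1 ω).elim_finite_subcover (fun i => ball (x i) r)
      (fun _ => isOpen_ball) fun y _ => mem_iUnion.2 (hx.exists_dist_lt y hr)
    refine ⟨t.sup id + 1,
      ht.trans (iUnion₂_subset fun i hi => ball_subset_closedBall.trans ?_)⟩
    exact subset_biUnion_of_mem (u := fun y => closedBall y r)
      (mem_image_of_mem x (Nat.lt_succ_of_le (t.le_sup (f := id) hi)))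
  have hlim := tendsto_measure_iInter_atTop (μ := P) (s := fun n => {ω | ¬ K ω ⊆ U n})
    (fun n => (measurableSet_setOf_subset_of_isClosed hK.2.1 hK.2.2 (hU_closed n)).compl
      |>.nullMeasurableSet)
    (fun n n' h ω hω hsub => hω (hsub.trans (hU_mono h))) ⟨0, measure_ne_top _ _⟩
  have hempty : ⋂ n, {ω | ¬ K ω ⊆ U n} = ∅ :=
    iInter_eq_empty_iff.2 fun ω => (hcover ω).imp fun _ => not_not_intro
  rw [hempty, measure_empty] at hlim
  exact (hlim.eventually (ge_mem_nhds hη)).exists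

theorem exists_isCompact_measure_not_subset_le [CompleteSpace X] (hK : IsCompactRandomSet K)
    {η : ℝ≥0∞} (hη : η ≠ 0) : ∃ C, IsCompact C ∧ P {ω | ¬ K ω ⊆ C} ≤ η := by
  rcases isEmpty_or_nonempty X with _ | _
  · exact ⟨∅, isCompact_empty, by simp [eq_empty_of_isEmpty]⟩
  obtain ⟨x, hx⟩ := TopologicalSpace.exists_dense_seq X
  obtain ⟨η', hη'_pos, hη'_sum⟩ := ENNReal.exists_pos_sum_of_countable hη ℕ
  choose n hn using fun m : ℕ => hK.exists_measure_not_subset_biUnion_closedBall_le (P := P) hx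
    Nat.one_div_pos_of_nat (ENNReal.coe_pos.2 (hη'_pos m))
  set V : ℕ → Set X := fun m => ⋃ y ∈ x '' Iio (n m), closedBall y (1 / (m + 1))
  refine ⟨⋂ m, V m, isCompact_iInter_biUnion_closedBall fun m => (finite_Iio (n m)).image x, ?_⟩
  calc P {ω | ¬ K ω ⊆ ⋂ m, V m} = P (⋃ m, {ω | ¬ K ω ⊆ V m}) := by
        simp only [subset_iInter_iff, not_forall, ofPred_exists]
    _ ≤ ∑' m, P {ω | ¬ K ω ⊆ V m} := measure_iUnion_le _
    _ ≤ ∑' m, (η' m : ℝ≥0∞) := ENNReal.tsum_le_tsum hn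
    _ ≤ η := hη'_sum.le

end IsCompactRandomSet

theorem infEDist_le_semiDist {X : Type*} [PseudoEMetricSpace X] {A B : Set X} {b : X}
    (hb : b ∈ B) : infEDist b A ≤ semiDist B A :=
  le_iSup₂ (f := fun b _ => infEDist b A) b hb

theorem subset_cthickening_of_semiDist_le {X : Type*} [PseudoEMetricSpace X] {A K C : Set X}
    {δ : ℝ} (hAK : semiDist A K ≤ ENNReal.ofReal δ) (hKC : K ⊆ C) : A ⊆ cthickening δ C :=
  fun _ ha => mem_cthickening_iff.2 <|
    (infEDist_anti hKC).trans ((infEDist_le_semiDist ha).trans hAK)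

namespace MetricDS

variable (T : MetricDS Ω P)

theorem theta_neg_apply (t : ℝ) (ω : Ω) : T.θ (-t) (T.θ t ω) = ω := by
  rw [← Function.comp_apply (f := T.θ (-t)), ← T.theta_add, neg_add_cancel, T.theta_zero, id]

theorem theta_apply_neg (t : ℝ) (ω : Ω) : T.θ t (T.θ (-t) ω) = ω := by
  simpa using T.theta_neg_apply (-t) ω

def thetaEquiv (t : ℝ) : Ω ≃ᵐ Ω where
  toFun := T.θ t
  invFun := T.θ (-t)
  left_inv := T.theta_neg_apply t
  right_inv := T.theta_apply_neg t
  measurable_toFun := (T.measurePreserving_theta t).measurable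
  measurable_invFun := (T.measurePreserving_theta (-t)).measurable

theorem measure_preimage_theta (t : ℝ) (s : Set Ω) : P (T.θ t ⁻¹' s) = P s :=
  MeasurePreserving.measure_preimage_equiv (f := T.thetaEquiv t) (T.measurePreserving_theta t) s

end MetricDS

theorem one_sub_le_measure_of_measure_compl_le {α : Type*} [MeasurableSpace α]
    {μ : Measure α} [IsProbabilityMeasure μ] {s : Set α} {η : ℝ≥0∞} (h : μ sᶜ ≤ η) :
    1 - η ≤ μ s :=
  tsub_le_iff_right.2 <| calc
    1 = μ univ := measure_univ.symm
    _ ≤ μ s + μ sᶜ := measure_univ_le_add_compl s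
    _ ≤ μ s + η := add_le_add_right h _

theorem weakC_attractor_necessary_condition_general
    [CompleteSpace E] [SecondCountableTopology E] [IsProbabilityMeasure P]
    (ψ : ContinuousRDS E Ω P) (K : Ω → Set E) (hK : IsCompactRandomSet K)
    (hattr : ∀ C : Set E, IsCompact C → WeaklyAttracts ψ K C) :
    ∀ ε : ℝ, 0 < ε → ∃ Cε : Set E, IsCompact Cε ∧
      ∀ δ : ℝ, 0 < δ → ∀ C : Set E, IsCompact C →
        ∃ t₀ : ℝ, 0 < t₀ ∧ ∀ t : ℝ, t₀ ≤ t →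
          ENNReal.ofReal (1 - ε) ≤
            P {ω | (fun x => ψ.φ t x ω) '' C ⊆ cthickening δ Cε} := by
  intro ε hε
  have hε₂ : ENNReal.ofReal (ε / 2) ≠ 0 := (ENNReal.ofReal_pos.2 (half_pos hε)).ne'
  obtain ⟨Cε, hCε, hKCε⟩ := hK.exists_isCompact_measure_not_subset_le (P := P) hε₂
  refine ⟨Cε, hCε, fun δ hδ C hC => ?_⟩
  obtain ⟨a, ha⟩ := eventually_atTop.1 <|
    (hattr C hC _ (ENNReal.ofReal_pos.2 hδ)).eventually_lt_const (pos_iff_ne_zero.2 hε₂)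
  refine ⟨max a 1, lt_max_of_lt_right one_pos, fun t ht => ?_⟩
  -- pull back by `ϑ₋ₜ` to the event `φ(t, ϑ₋ₜ ω)(C) ⊆ Cε^δ` controlled by the attraction
  rw [ENNReal.ofReal_sub _ hε.le, ENNReal.ofReal_one, ← ψ.measure_preimage_theta (-t)]
  refine one_sub_le_measure_of_measure_compl_le ?_
  calc _ ≤ P ({ω | ¬ K ω ⊆ Cε} ∪ {ω | ENNReal.ofReal δ <
          semiDist ((fun x => ψ.φ t x (ψ.θ (-t) ω)) '' C) (K ω)}) :=
        measure_mono <| compl_subset_comm.1 fun ω hω => by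
          simp only [mem_compl_iff, mem_union, mem_ofPred_eq, not_or, not_not, not_lt] at hω
          exact subset_cthickening_of_semiDist_le hω.2 hω.1
    _ ≤ ENNReal.ofReal (ε / 2) + ENNReal.ofReal (ε / 2) :=
        (measure_union_le _ _).trans (add_le_add hKCε (ha t (le_of_max_le_left ht)).le)
    _ = ENNReal.ofReal ε := by
        rw [← ENNReal.ofReal_add (by positivity) (by positivity), add_halves]

/-- If there is a compact random set `K` weakly attracting every compact subset of `E`, then
for every `ε > 0` there is a compact `Cε` such that for each `δ > 0` and each compact `C ⊆ E`
there is `t₀ > 0` with `P{φ(t,ω)(C) ⊆ Cε^δ} ≥ 1 - ε` for all `t ≥ t₀`. -/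
theorem weakC_attractor_necessary_condition
    [CompleteSpace E] [SecondCountableTopology E] [BorelSpace E] [IsProbabilityMeasure P]
    (ψ : ContinuousRDS E Ω P) (K : Ω → Set E) (hK : IsCompactRandomSet K)
    (hattr : ∀ C : Set E, IsCompact C → WeaklyAttracts ψ K C) :
    ∀ ε : ℝ, 0 < ε → ∃ Cε : Set E, IsCompact Cε ∧
      ∀ δ : ℝ, 0 < δ → ∀ C : Set E, IsCompact C →
        ∃ t₀ : ℝ, 0 < t₀ ∧ ∀ t : ℝ, t₀ ≤ t →
          ENNReal.ofReal (1 - ε) ≤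
            P {ω | (fun x => ψ.φ t x ω) '' C ⊆ cthickening δ Cε} :=
  weakC_attractor_necessary_condition_general ψ K hK hattr
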